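/- arXiv:2002.12015 — 2 statements merged into one kernel-verified Lean document; each statement's English description precedes it below -/
import Mathlib

section
/- Let a>0, s>1/2 with s−1/2 ∉ ℕ, m = ⌊s−1/2⌋, and let g : ℝ → ℂ be measurable, vanishing outside [-a,a], with ∫_{-a}^{a} |g(ξ)|²|ξ|^{2s} dξ < ∞. Then for every z ∈ ℂ the integral f(z) = (2π)^{-1/2} ∫_{-a}^{a} g(ξ)(e^{izξ} − P_m(izξ)) dξ converges absolutely, f is entire, and there is a constant C>0 depending only on a and s such that |f(z)| ≤ C |z|^{m+1} e^{a|z|} (∫_{-a}^{a} |g(ξ)|²|ξ|^{2s} dξ)^{1/2} for all z ∈ ℂ. In particular f is of exponential type a. -/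
/-!
The Taylor remainder bound `|e^w - P_m(w)| ≤ |w|^(m+1) e^|w|` dominates the integrand by
`|g(ξ)| |ξ|^(m+1) |z|^(m+1) e^(a|z|)`. Splitting `|g| |ξ|^(m+1) = (|g| |ξ|^s) · |ξ|^(m+1-s)`,
Cauchy–Schwarz bounds the integral of `|g| |ξ|^(m+1)` by the weighted `L²` norm of `g` times
`(∫_{-a}^{a} |ξ|^(2(m+1-s)))^(1/2)`, which is finite because `m + 1 > s - 1/2`. The derivative
in `z` of the integrand is dominated in the same way, so `f` is entire, and the polynomial factor
`|z|^(m+1)` is absorbed into `e^(ε|z|)`.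
-/

open MeasureTheory Complex Filter Topology

noncomputable section

/-- `f` is an entire function of exponential type `a`. -/
def ExpType (a : ℝ) (f : ℂ → ℂ) : Prop :=
  ∀ ε > (0 : ℝ), ∃ C > (0 : ℝ), ∀ z : ℂ, ‖f z‖ ≤ C * Real.exp ((a + ε) * ‖z‖)

/-- The paper's `e^w - P_m(w)` is `expTail (m + 1) w`. -/
def expTail (n : ℕ) (w : ℂ) : ℂ :=
  exp w - ∑ j ∈ Finset.range n, w ^ j / (j.factorial : ℂ)

@[fun_prop]
lemma continuous_expTail (n : ℕ) : Continuous (expTail n) := by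
  unfold expTail
  fun_prop

lemma norm_expTail_le (n : ℕ) (w : ℂ) : ‖expTail n w‖ ≤ ‖w‖ ^ n * Real.exp ‖w‖ :=
  norm_exp_sub_sum_le_norm_mul_exp w n

lemma hasDerivAt_sum_range_pow_div_factorial (n : ℕ) (w : ℂ) :
    HasDerivAt (fun w : ℂ => ∑ j ∈ Finset.range (n + 1), w ^ j / (j.factorial : ℂ))
      (∑ j ∈ Finset.range n, w ^ j / (j.factorial : ℂ)) w := by
  refine (HasDerivAt.fun_sum (u := Finset.range (n + 1))
    fun j _ => (hasDerivAt_pow j w).div_const (j.factorial : ℂ)).congr_deriv ?_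
  rw [Finset.sum_range_succ']
  refine (add_eq_left.2 (by simp)).trans (Finset.sum_congr rfl fun j _ => ?_)
  rw [Nat.factorial_succ]
  push_cast
  field_simp

lemma hasDerivAt_expTail (n : ℕ) (w : ℂ) : HasDerivAt (expTail (n + 1)) (expTail n w) w :=
  (hasDerivAt_exp w).sub (hasDerivAt_sum_range_pow_div_factorial n w)

lemma intervalIntegrable_abs_rpow {t : ℝ} (ht : -1 < t) (a b : ℝ) :
    IntervalIntegrable (fun x : ℝ => |x| ^ t) volume a b := by
  refine intervalIntegrable_of_even (fun x => by rw [abs_neg]) (fun c hc => ?_) (by simp) (by simp)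
  refine (intervalIntegral.intervalIntegrable_rpow' ht).congr fun x hx => ?_
  rw [Set.uIoc_of_le hc.le] at hx
  simp only [abs_of_pos hx.1]

lemma integrableOn_abs_rpow_Icc {t : ℝ} (ht : -1 < t) (a : ℝ) :
    IntegrableOn (fun x : ℝ => |x| ^ t) (Set.Icc (-a) a) :=
  ((intervalIntegrable_iff' (by simp)).1 (intervalIntegrable_abs_rpow ht (-a) a)).mono_set
    Set.Icc_subset_uIcc

lemma integral_mul_le_sqrt_mul_sqrt {α : Type*} [MeasurableSpace α] {μ : Measure α}
    {u v : α → ℝ} (hu0 : 0 ≤ᵐ[μ] u) (hv0 : 0 ≤ᵐ[μ] v) (hu : MemLp u 2 μ) (hv : MemLp v 2 μ) :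
    ∫ x, u x * v x ∂μ ≤ √(∫ x, u x ^ 2 ∂μ) * √(∫ x, v x ^ 2 ∂μ) := by
  have := integral_mul_le_Lp_mul_Lq_of_nonneg Real.HolderConjugate.two_two hu0 hv0
    (by simpa using hu) (by simpa using hv)
  simpa only [Real.rpow_two, Real.sqrt_eq_rpow] using this

lemma sq_abs_rpow (ξ t : ℝ) : (|ξ| ^ t) ^ 2 = |ξ| ^ (2 * t) := by
  rw [mul_comm, Real.rpow_mul (abs_nonneg ξ), Real.rpow_two]

section WeightedL2

variable {a s : ℝ} {g : ℝ → ℂ}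

lemma memLp_two_norm_mul_abs_rpow (hg : AEStronglyMeasurable g)
    (hint : Integrable (fun ξ : ℝ => ‖g ξ‖ ^ 2 * |ξ| ^ (2 * s))) :
    MemLp (fun ξ : ℝ => ‖g ξ‖ * |ξ| ^ s) 2 := by
  refine (memLp_two_iff_integrable_sq
    (hg.norm.mul (continuous_abs.measurable.pow_const s).aestronglyMeasurable)).2 (hint.congr ?_)
  filter_upwards with ξ
  rw [Pi.mul_apply, mul_pow, sq_abs_rpow]

lemma memLp_two_indicator_abs_rpow {t : ℝ} (ht : -1 / 2 < t) (a : ℝ) :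
    MemLp ((Set.Icc (-a) a).indicator fun ξ : ℝ => |ξ| ^ t) 2 := by
  rw [memLp_indicator_iff_restrict measurableSet_Icc, memLp_two_iff_integrable_sq
    (continuous_abs.measurable.pow_const t).aestronglyMeasurable]
  refine (integrableOn_abs_rpow_Icc (t := 2 * t) (by linarith) a).congr_fun (fun ξ _ => ?_)
    measurableSet_Icc
  exact (sq_abs_rpow ξ t).symm

lemma norm_mul_abs_rpow_ae_eq (hsupp : ∀ ξ : ℝ, ξ ∉ Set.Icc (-a) a → g ξ = 0) (r : ℝ) :
    (fun ξ : ℝ => ‖g ξ‖ * |ξ| ^ r) =ᵐ[volume]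
      fun ξ => ‖g ξ‖ * |ξ| ^ s * (Set.Icc (-a) a).indicator (fun ξ => |ξ| ^ (r - s)) ξ := by
  -- only a.e.: with Mathlib's `0 ^ 0 = 1`, `0 ^ s * 0 ^ (r - s)` can differ from `0 ^ r`
  filter_upwards [volume.ae_ne 0] with ξ hξ
  by_cases hξa : ξ ∈ Set.Icc (-a) a
  · rw [Set.indicator_of_mem hξa, mul_assoc, ← Real.rpow_add (abs_pos.2 hξ), add_sub_cancel]
  · simp [hsupp ξ hξa]

lemma integrable_norm_mul_abs_rpow (hg : AEStronglyMeasurable g)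
    (hsupp : ∀ ξ : ℝ, ξ ∉ Set.Icc (-a) a → g ξ = 0)
    (hint : Integrable (fun ξ : ℝ => ‖g ξ‖ ^ 2 * |ξ| ^ (2 * s))) {r : ℝ} (hr : s - 1 / 2 < r) :
    Integrable (fun ξ : ℝ => ‖g ξ‖ * |ξ| ^ r) :=
  ((memLp_two_norm_mul_abs_rpow hg hint).integrable_mul
    (memLp_two_indicator_abs_rpow (by linarith) a)).congr (norm_mul_abs_rpow_ae_eq hsupp r).symm

lemma integral_norm_mul_abs_rpow_le (hg : AEStronglyMeasurable g)
    (hsupp : ∀ ξ : ℝ, ξ ∉ Set.Icc (-a) a → g ξ = 0)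
    (hint : Integrable (fun ξ : ℝ => ‖g ξ‖ ^ 2 * |ξ| ^ (2 * s))) {r : ℝ} (hr : s - 1 / 2 < r) :
    ∫ ξ, ‖g ξ‖ * |ξ| ^ r ≤
      √(∫ ξ, ‖g ξ‖ ^ 2 * |ξ| ^ (2 * s)) * √(∫ ξ in Set.Icc (-a) a, |ξ| ^ (2 * (r - s))) := by
  rw [integral_congr_ae (norm_mul_abs_rpow_ae_eq hsupp r)]
  refine (integral_mul_le_sqrt_mul_sqrt (ae_of_all _ fun ξ => by positivity)
    (ae_of_all _ fun ξ => Set.indicator_nonneg (fun ξ _ => by positivity) ξ)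
    (memLp_two_norm_mul_abs_rpow hg hint)
    (memLp_two_indicator_abs_rpow (by linarith) a)).trans_eq ?_
  rw [← integral_indicator measurableSet_Icc]
  congr 3 with ξ
  · rw [mul_pow, sq_abs_rpow]
  · by_cases hξ : ξ ∈ Set.Icc (-a) a <;> simp [hξ, sq_abs_rpow]

end WeightedL2

lemma norm_expTail_I_mul_le {a ξ R : ℝ} (hξ : |ξ| ≤ a) {z : ℂ} (hz : ‖z‖ ≤ R) (n : ℕ) :
    ‖expTail n (I * z * ξ)‖ ≤ |ξ| ^ n * (R ^ n * Real.exp (a * R)) := by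
  have hnorm : ‖I * z * ξ‖ = ‖z‖ * |ξ| := by simp
  have hR : 0 ≤ R := (norm_nonneg z).trans hz
  calc ‖expTail n (I * z * ξ)‖ ≤ (‖z‖ * |ξ|) ^ n * Real.exp (‖z‖ * |ξ|) := by
        simpa only [hnorm] using norm_expTail_le n (I * z * ξ)
    _ ≤ (R * |ξ|) ^ n * Real.exp (a * R) := by
        have hzξ : ‖z‖ * |ξ| ≤ R * |ξ| := by gcongr
        exact mul_le_mul (pow_le_pow_left₀ (by positivity) hzξ n)
          (Real.exp_le_exp.2 (by nlinarith [abs_nonneg ξ])) (by positivity) (by positivity)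
    _ = |ξ| ^ n * (R ^ n * Real.exp (a * R)) := by ring

section ExpTailIntegral

variable {a : ℝ} {g : ℝ → ℂ}

lemma norm_mul_expTail_le (hsupp : ∀ ξ : ℝ, ξ ∉ Set.Icc (-a) a → g ξ = 0) {z : ℂ} {R : ℝ}
    (hz : ‖z‖ ≤ R) (n : ℕ) (ξ : ℝ) :
    ‖g ξ * expTail n (I * z * ξ)‖ ≤ ‖g ξ‖ * |ξ| ^ n * (R ^ n * Real.exp (a * R)) := by
  by_cases hξ : ξ ∈ Set.Icc (-a) a
  · rw [norm_mul, mul_assoc (‖g ξ‖)]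
    exact mul_le_mul_of_nonneg_left (norm_expTail_I_mul_le (abs_le.2 hξ) hz n) (norm_nonneg (g ξ))
  · simp [hsupp ξ hξ]

lemma integrable_mul_expTail (hg : AEStronglyMeasurable g)
    (hsupp : ∀ ξ : ℝ, ξ ∉ Set.Icc (-a) a → g ξ = 0) {n : ℕ}
    (hint : Integrable (fun ξ : ℝ => ‖g ξ‖ * |ξ| ^ n)) (z : ℂ) :
    Integrable (fun ξ : ℝ => g ξ * expTail n (I * z * ξ)) :=
  (hint.mul_const _).mono' (hg.mul (Continuous.aestronglyMeasurable (by fun_prop)))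
    (ae_of_all _ (norm_mul_expTail_le hsupp le_rfl n))

lemma norm_integral_mul_expTail_le (hsupp : ∀ ξ : ℝ, ξ ∉ Set.Icc (-a) a → g ξ = 0) {n : ℕ}
    (hint : Integrable (fun ξ : ℝ => ‖g ξ‖ * |ξ| ^ n)) (z : ℂ) :
    ‖∫ ξ, g ξ * expTail n (I * z * ξ)‖ ≤
      (∫ ξ, ‖g ξ‖ * |ξ| ^ n) * (‖z‖ ^ n * Real.exp (a * ‖z‖)) := by
  rw [← integral_mul_const]
  exact norm_integral_le_of_norm_le (hint.mul_const _)
    (ae_of_all _ (norm_mul_expTail_le hsupp le_rfl n))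

lemma differentiable_integral_mul_expTail (hg : AEStronglyMeasurable g)
    (hsupp : ∀ ξ : ℝ, ξ ∉ Set.Icc (-a) a → g ξ = 0) {n : ℕ}
    (hint : Integrable (fun ξ : ℝ => ‖g ξ‖ * |ξ| ^ (n + 1))) :
    Differentiable ℂ (fun z : ℂ => ∫ ξ, g ξ * expTail (n + 1) (I * z * ξ)) := by
  intro z₀
  have hderiv (ξ : ℝ) (z : ℂ) : HasDerivAt (fun z => g ξ * expTail (n + 1) (I * z * ξ))
      (g ξ * (expTail n (I * z * ξ) * (I * ξ))) z := by
    have hlin : HasDerivAt (fun z : ℂ => I * z * ξ) (I * ξ) z := by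
      simpa using ((hasDerivAt_id z).const_mul I).mul_const (ξ : ℂ)
    exact ((hasDerivAt_expTail n _).comp z hlin).const_mul (g ξ)
  set R := ‖z₀‖ + 1
  have hbound (ξ : ℝ) (z : ℂ) (hz : z ∈ Metric.ball z₀ 1) :
      ‖g ξ * (expTail n (I * z * ξ) * (I * ξ))‖ ≤
        ‖g ξ‖ * |ξ| ^ (n + 1) * (R ^ n * Real.exp (a * R)) := by
    have hzR : ‖z‖ ≤ R := by
      have := norm_le_norm_add_norm_sub' z z₀
      linarith [mem_ball_iff_norm.1 hz]
    calc ‖g ξ * (expTail n (I * z * ξ) * (I * ξ))‖ = ‖g ξ * expTail n (I * z * ξ)‖ * |ξ| := by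
          simp [mul_assoc]
      _ ≤ ‖g ξ‖ * |ξ| ^ n * (R ^ n * Real.exp (a * R)) * |ξ| := by
          gcongr
          exact norm_mul_expTail_le hsupp hzR n ξ
      _ = ‖g ξ‖ * |ξ| ^ (n + 1) * (R ^ n * Real.exp (a * R)) := by ring
  exact (hasDerivAt_integral_of_dominated_loc_of_deriv_le (Metric.ball_mem_nhds z₀ one_pos)
    (Eventually.of_forall fun z => (integrable_mul_expTail hg hsupp hint z).aestronglyMeasurable)
    (integrable_mul_expTail hg hsupp hint z₀)
    (hg.mul (Continuous.aestronglyMeasurable (by fun_prop)))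
    (ae_of_all _ hbound) (hint.mul_const _)
    (ae_of_all _ fun ξ z _ => hderiv ξ z)).2.differentiableAt

end ExpTailIntegral

lemma expType_of_norm_le {a B : ℝ} (hB : 0 ≤ B) {n : ℕ} {f : ℂ → ℂ}
    (hf : ∀ z, ‖f z‖ ≤ B * ‖z‖ ^ n * Real.exp (a * ‖z‖)) : ExpType a f := by
  intro ε hε
  refine ⟨B * (n.factorial / ε ^ n) + 1, by positivity, fun z => ?_⟩
  have hpow : ‖z‖ ^ n ≤ n.factorial / ε ^ n * Real.exp (ε * ‖z‖) := by
    have := Real.pow_div_factorial_le_exp _ (mul_nonneg hε.le (norm_nonneg z)) n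
    rw [div_le_iff₀ (by positivity), mul_pow] at this
    rw [div_mul_eq_mul_div, le_div_iff₀ (by positivity)]
    linarith
  calc ‖f z‖ ≤ B * ‖z‖ ^ n * Real.exp (a * ‖z‖) := hf z
    _ ≤ B * (n.factorial / ε ^ n * Real.exp (ε * ‖z‖)) * Real.exp (a * ‖z‖) := by gcongr
    _ = B * (n.factorial / ε ^ n) * Real.exp ((a + ε) * ‖z‖) := by
        rw [add_mul, Real.exp_add]; ring
    _ ≤ (B * (n.factorial / ε ^ n) + 1) * Real.exp ((a + ε) * ‖z‖) := by gcongr; linarith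

theorem stmt3_general (a s : ℝ) (m : ℕ) (hm : m = Nat.floor (s - 1 / 2)) :
    ∃ C > (0 : ℝ), ∀ (g : ℝ → ℂ) (f : ℂ → ℂ),
      Measurable g →
      (∀ ξ : ℝ, ξ ∉ Set.Icc (-a) a → g ξ = 0) →
      Integrable (fun ξ : ℝ => ‖g ξ‖ ^ 2 * |ξ| ^ (2 * s)) →
      (∀ z : ℂ, f z =
        (((2 * Real.pi) ^ (-(1 / 2) : ℝ) : ℝ) : ℂ) *
          ∫ ξ : ℝ, g ξ * (Complex.exp (Complex.I * z * ξ) -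
            ∑ j ∈ Finset.range (m + 1), (Complex.I * z * ξ) ^ j / (j.factorial : ℂ))) →
      (∀ z : ℂ, Integrable (fun ξ : ℝ => g ξ * (Complex.exp (Complex.I * z * ξ) -
          ∑ j ∈ Finset.range (m + 1), (Complex.I * z * ξ) ^ j / (j.factorial : ℂ)))) ∧
      Differentiable ℂ f ∧
      (∀ z : ℂ, ‖f z‖ ≤
          C * ‖z‖ ^ (m + 1) * Real.exp (a * ‖z‖) *
            Real.sqrt (∫ ξ : ℝ, ‖g ξ‖ ^ 2 * |ξ| ^ (2 * s))) ∧
      ExpType a f := by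
  have hsm : s - 1 / 2 < ((m + 1 : ℕ) : ℝ) := by
    rw [hm]; push_cast; exact Nat.lt_floor_add_one _
  set c : ℝ := (2 * Real.pi) ^ (-(1 / 2) : ℝ)
  set K : ℝ := ∫ ξ in Set.Icc (-a) a, |ξ| ^ (2 * (((m + 1 : ℕ) : ℝ) - s))
  refine ⟨c * √K + 1, by positivity, fun g f hg hsupp hint hf => ?_⟩
  set G : ℝ := ∫ ξ, ‖g ξ‖ ^ 2 * |ξ| ^ (2 * s)
  have hgm : Integrable (fun ξ : ℝ => ‖g ξ‖ * |ξ| ^ (m + 1)) := by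
    simpa only [Real.rpow_natCast] using
      integrable_norm_mul_abs_rpow hg.aestronglyMeasurable hsupp hint hsm
  have hmoment : ∫ ξ, ‖g ξ‖ * |ξ| ^ (m + 1) ≤ √G * √K := by
    simpa only [Real.rpow_natCast] using
      integral_norm_mul_abs_rpow_le hg.aestronglyMeasurable hsupp hint hsm
  have hbound (z : ℂ) : ‖f z‖ ≤ (c * √K + 1) * ‖z‖ ^ (m + 1) * Real.exp (a * ‖z‖) * √G := by
    have hc : 0 ≤ c := by positivity
    calc ‖f z‖ ≤ c * ((∫ ξ, ‖g ξ‖ * |ξ| ^ (m + 1)) * (‖z‖ ^ (m + 1) * Real.exp (a * ‖z‖))) := by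
          rw [hf z, norm_mul, Complex.norm_real, Real.norm_of_nonneg hc]
          exact mul_le_mul_of_nonneg_left (norm_integral_mul_expTail_le hsupp hgm z) hc
      _ ≤ c * ((√G * √K) * (‖z‖ ^ (m + 1) * Real.exp (a * ‖z‖))) := by gcongr
      _ ≤ (c * √K + 1) * ‖z‖ ^ (m + 1) * Real.exp (a * ‖z‖) * √G := by
          nlinarith [show 0 ≤ ‖z‖ ^ (m + 1) * Real.exp (a * ‖z‖) * √G by positivity]
  refine ⟨integrable_mul_expTail hg.aestronglyMeasurable hsupp hgm, ?_, hbound,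
    expType_of_norm_le (B := (c * √K + 1) * √G) (n := m + 1) (by positivity)
      fun z => (hbound z).trans_eq (by ring)⟩
  rw [funext hf]
  exact (differentiable_integral_mul_expTail hg.aestronglyMeasurable hsupp hgm).const_mul _

theorem stmt3 (a s : ℝ) (m : ℕ) (ha : 0 < a) (hs : 1 / 2 < s)
    (hsnotnat : ∀ n : ℕ, s - 1 / 2 ≠ n) (hm : m = Nat.floor (s - 1 / 2)) :
    ∃ C > (0 : ℝ), ∀ (g : ℝ → ℂ) (f : ℂ → ℂ),
      Measurable g →
      (∀ ξ : ℝ, ξ ∉ Set.Icc (-a) a → g ξ = 0) →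
      Integrable (fun ξ : ℝ => ‖g ξ‖ ^ 2 * |ξ| ^ (2 * s)) →
      (∀ z : ℂ, f z =
        (((2 * Real.pi) ^ (-(1 / 2) : ℝ) : ℝ) : ℂ) *
          ∫ ξ : ℝ, g ξ * (Complex.exp (Complex.I * z * ξ) -
            ∑ j ∈ Finset.range (m + 1), (Complex.I * z * ξ) ^ j / (j.factorial : ℂ))) →
      (∀ z : ℂ, Integrable (fun ξ : ℝ => g ξ * (Complex.exp (Complex.I * z * ξ) -
          ∑ j ∈ Finset.range (m + 1), (Complex.I * z * ξ) ^ j / (j.factorial : ℂ)))) ∧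
      Differentiable ℂ f ∧
      (∀ z : ℂ, ‖f z‖ ≤
          C * ‖z‖ ^ (m + 1) * Real.exp (a * ‖z‖) *
            Real.sqrt (∫ ξ : ℝ, ‖g ξ‖ ^ 2 * |ξ| ^ (2 * s))) ∧
      ExpType a f :=
  stmt3_general a s m hm
end
end

section
/- Let a>0 and 0<s<1/2. There do NOT exist a sequence (λ_n)_{n∈ℤ} of real numbers and constants A,B>0 such that for every measurable g vanishing outside [-a,a] with ∫_{-a}^{a}|g(ξ)|²|ξ|^{2s}dξ < ∞, one has A ∫_{-a}^{a}|g(ξ)|²|ξ|^{2s}dξ ≤ Σ_{n∈ℤ} |(2π)^{-1/2}∫_{-a}^{a} g(ξ) e^{iλ_nξ} dξ|² ≤ B ∫_{-a}^{a}|g(ξ)|²|ξ|^{2s}dξ. (That is, the fractional Paley–Wiener space PW^s_a admits no real sampling sequence; in particular PW^s_a is not a de Branges space.) -/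
/-!
Test both sampling inequalities on `g = 𝟙_[-r, r] · e^{-itξ}`: its samples are
`(2π)^{-1/2} · 2r sinc (r (λ_n - t))` and its weighted energy is of order `r ^ (1 + 2s)`.
For `r = 1/ρ` each sample with `|λ_n - t| ≤ ρ` is of size `≳ r`, so the upper inequality allows at
most `C ρ ^ (1 - 2s)` points `λ_n` in any interval of length `2ρ`. Since `s > 0` this count is
sublinear, hence the `λ_n` leave gaps of every length `G`. For `r = a` and `t` the centre of such a
gap, `sinc² x ≤ x⁻²` and a dyadic decomposition of the `λ_n` bound the sampled sum by `O(1/G)`,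
whereas the lower inequality keeps it above a positive constant independent of `t`.
-/

open MeasureTheory Complex Filter Topology

noncomputable section

open Finset
open scoped Real

namespace Real

lemma two_div_pi_le_sinc {x : ℝ} (hx : |x| ≤ 1) : 2 / π ≤ sinc x := by
  wlog h0 : 0 ≤ x generalizing x
  · simpa using this (x := -x) (by rwa [abs_neg]) (by linarith)
  rcases h0.eq_or_lt with rfl | hpos
  · rw [sinc_zero, div_le_one pi_pos]
    linarith [pi_gt_three]
  · rw [sinc_of_ne_zero hpos.ne', le_div_iff₀ hpos]
    exact mul_le_sin h0 (by linarith [abs_of_nonneg h0 ▸ hx, pi_gt_three])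

lemma abs_sinc_le_inv_abs {x : ℝ} (hx : x ≠ 0) : |sinc x| ≤ |x|⁻¹ := by
  rw [sinc_of_ne_zero hx, abs_div, div_eq_mul_inv]
  exact mul_le_of_le_one_left (by positivity) (abs_sin_le_one x)

lemma sinc_sq_le_inv_sq {x : ℝ} (hx : x ≠ 0) : sinc x ^ 2 ≤ (x ^ 2)⁻¹ := by
  rw [← sq_abs, ← sq_abs x, ← inv_pow]
  exact pow_le_pow_left₀ (abs_nonneg _) (abs_sinc_le_inv_abs hx) 2

end Real

lemma integral_Icc_exp_I_mul_eq_sinc {r : ℝ} (hr : 0 ≤ r) (μ : ℝ) :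
    ∫ ξ in Set.Icc (-r) r, cexp (I * μ * ξ) = 2 * r * Real.sinc (r * μ) := by
  rw [integral_Icc_eq_integral_Ioc, ← intervalIntegral.integral_of_le (by linarith)]
  rcases eq_or_ne μ 0 with rfl | hμ
  · simp only [ofReal_zero, mul_zero, zero_mul, exp_zero, intervalIntegral.integral_const,
      sub_neg_eq_add, real_smul, ofReal_add, mul_one, Real.sinc_zero, ofReal_one]
    ring
  · have := intervalIntegral.integral_comp_mul_left (a := -r) (b := r)
      (fun t : ℝ => cexp (t * I)) hμ
    simp only [mul_neg, integral_exp_mul_I_eq_sinc, ofReal_mul] at this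
    rw [show (fun ξ : ℝ => cexp (I * μ * ξ)) = fun ξ : ℝ => cexp (μ * ξ * I) from
      funext fun ξ => by ring_nf, this, mul_comm r μ]
    have hμ' : (μ : ℂ) ≠ 0 := ofReal_ne_zero.2 hμ
    rw [Complex.real_smul]
    push_cast
    field_simp

def fourierSample (a : ℝ) (g : ℝ → ℂ) (μ : ℝ) : ℂ :=
  (((2 * Real.pi) ^ (-(1 / 2) : ℝ) : ℝ) : ℂ) * ∫ ξ in Set.Icc (-a) a, g ξ * cexp (I * μ * ξ)

def weightedEnergy (s : ℝ) (g : ℝ → ℂ) : ℝ := ∫ ξ, ‖g ξ‖ ^ 2 * |ξ| ^ (2 * s)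

def IsSamplingSequence (a s : ℝ) (lam : ℤ → ℝ) (A B : ℝ) : Prop :=
  ∀ g : ℝ → ℂ, Measurable g → (∀ ξ : ℝ, ξ ∉ Set.Icc (-a) a → g ξ = 0) →
    Integrable (fun ξ : ℝ => ‖g ξ‖ ^ 2 * |ξ| ^ (2 * s)) →
    A * weightedEnergy s g ≤ ∑' n, ‖fourierSample a g (lam n)‖ ^ 2 ∧
      ∑' n, ‖fourierSample a g (lam n)‖ ^ 2 ≤ B * weightedEnergy s g

def modulatedIndicator (r t : ℝ) : ℝ → ℂ :=
  Set.indicator (Set.Icc (-r) r) fun ξ => cexp (-(I * t * ξ))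

section ModulatedIndicator

variable {r t : ℝ}

lemma measurable_modulatedIndicator : Measurable (modulatedIndicator r t) :=
  (by fun_prop : Measurable fun ξ : ℝ => cexp (-(I * t * ξ))).indicator measurableSet_Icc

lemma modulatedIndicator_eq_zero {a ξ : ℝ} (hra : r ≤ a) (hξ : ξ ∉ Set.Icc (-a) a) :
    modulatedIndicator r t ξ = 0 :=
  Set.indicator_of_notMem (fun h => hξ (Set.Icc_subset_Icc (by linarith) hra h)) _

lemma norm_modulatedIndicator_sq_mul (p : ℝ) :
    (fun ξ => ‖modulatedIndicator r t ξ‖ ^ 2 * |ξ| ^ p) =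
      Set.indicator (Set.Icc (-r) r) fun ξ => |ξ| ^ p := by
  ext ξ
  by_cases hξ : ξ ∈ Set.Icc (-r) r
  · rw [modulatedIndicator, Set.indicator_of_mem hξ, Set.indicator_of_mem hξ,
      show -(I * t * ξ) = ((-(t * ξ) : ℝ) : ℂ) * I by push_cast; ring, norm_exp_ofReal_mul_I]
    ring
  · simp [modulatedIndicator, hξ]

lemma integrable_norm_modulatedIndicator_sq_mul {p : ℝ} (hp : 0 ≤ p) :
    Integrable fun ξ => ‖modulatedIndicator r t ξ‖ ^ 2 * |ξ| ^ p := by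
  rw [norm_modulatedIndicator_sq_mul, integrable_indicator_iff measurableSet_Icc]
  exact (continuous_abs.rpow_const fun _ => Or.inr hp).integrableOn_Icc

lemma weightedEnergy_modulatedIndicator (s : ℝ) :
    weightedEnergy s (modulatedIndicator r t) = ∫ ξ in Set.Icc (-r) r, |ξ| ^ (2 * s) := by
  rw [weightedEnergy, norm_modulatedIndicator_sq_mul, integral_indicator measurableSet_Icc]

lemma norm_fourierSample_modulatedIndicator_sq {a : ℝ} (hr : 0 ≤ r) (hra : r ≤ a) (μ : ℝ) :
    ‖fourierSample a (modulatedIndicator r t) μ‖ ^ 2 =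
      2 / π * (r * Real.sinc (r * (μ - t))) ^ 2 := by
  have hprod : (fun ξ : ℝ => modulatedIndicator r t ξ * cexp (I * μ * ξ)) =
      Set.indicator (Set.Icc (-r) r) fun ξ : ℝ => cexp (I * ((μ - t : ℝ) : ℂ) * ξ) := by
    ext ξ
    by_cases hξ : ξ ∈ Set.Icc (-r) r
    · rw [modulatedIndicator, Set.indicator_of_mem hξ, Set.indicator_of_mem hξ, ← Complex.exp_add]
      push_cast
      ring_nf
    · simp [modulatedIndicator, hξ]
  have hconst : ((2 * π) ^ (-(1 / 2) : ℝ)) ^ 2 = (2 * π)⁻¹ := by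
    rw [← Real.rpow_natCast, ← Real.rpow_mul (by positivity)]
    norm_num [Real.rpow_neg_one]
  rw [fourierSample, hprod, setIntegral_indicator measurableSet_Icc,
    Set.inter_eq_self_of_subset_right (Set.Icc_subset_Icc (by linarith) hra),
    integral_Icc_exp_I_mul_eq_sinc hr, norm_mul, ← ofReal_ofNat, ← ofReal_mul, ← ofReal_mul,
    norm_real, norm_real, Real.norm_eq_abs, Real.norm_eq_abs, mul_pow, sq_abs, sq_abs, hconst]
  field_simp

end ModulatedIndicator

section AbsRpow

variable {p r : ℝ}

lemma setIntegral_abs_rpow_le (hp : 0 ≤ p) (hr : 0 ≤ r) :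
    ∫ ξ in Set.Icc (-r) r, |ξ| ^ p ≤ 2 * r ^ (p + 1) := by
  calc ∫ ξ in Set.Icc (-r) r, |ξ| ^ p ≤ ∫ _ in Set.Icc (-r) r, r ^ p :=
        setIntegral_mono_on (continuous_abs.rpow_const fun _ => Or.inr hp).integrableOn_Icc
          (integrableOn_const (by simp)) measurableSet_Icc
          fun ξ hξ => Real.rpow_le_rpow (abs_nonneg ξ) (abs_le.2 hξ) hp
    _ = 2 * r ^ (p + 1) := by
        rw [setIntegral_const, Real.volume_real_Icc_of_le (by linarith), smul_eq_mul,
          Real.rpow_add_one' hr (by linarith)]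
        ring

lemma le_setIntegral_abs_rpow (hp : 0 ≤ p) (hr : 0 ≤ r) :
    (r / 2) ^ (p + 1) ≤ ∫ ξ in Set.Icc (-r) r, |ξ| ^ p := by
  have hcont : Continuous fun ξ : ℝ => |ξ| ^ p := continuous_abs.rpow_const fun _ => Or.inr hp
  calc (r / 2) ^ (p + 1) = ∫ _ in Set.Icc (r / 2) r, (r / 2) ^ p := by
        rw [setIntegral_const, Real.volume_real_Icc_of_le (by linarith), smul_eq_mul,
          Real.rpow_add_one' (by positivity) (by linarith)]
        ring
    _ ≤ ∫ ξ in Set.Icc (r / 2) r, |ξ| ^ p :=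
        setIntegral_mono_on (integrableOn_const (by simp)) hcont.integrableOn_Icc measurableSet_Icc
          fun ξ hξ => Real.rpow_le_rpow (by positivity) (hξ.1.trans (le_abs_self ξ)) hp
    _ ≤ ∫ ξ in Set.Icc (-r) r, |ξ| ^ p :=
        setIntegral_mono_set hcont.integrableOn_Icc (.of_forall fun ξ => by positivity)
          (Set.Icc_subset_Icc (by linarith) le_rfl).eventuallyLE

end AbsRpow

namespace IsSamplingSequence

variable {a s A B : ℝ} {lam : ℤ → ℝ}

lemma summable (H : IsSamplingSequence a s lam A B) (hA : 0 < A) {g : ℝ → ℂ}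
    (hg : Measurable g) (hsupp : ∀ ξ : ℝ, ξ ∉ Set.Icc (-a) a → g ξ = 0)
    (hint : Integrable fun ξ : ℝ => ‖g ξ‖ ^ 2 * |ξ| ^ (2 * s))
    (hpos : 0 < weightedEnergy s g) :
    Summable fun n => ‖fourierSample a g (lam n)‖ ^ 2 := by
  by_contra hns
  have := (H g hg hsupp hint).1
  rw [tsum_eq_zero_of_not_summable hns] at this
  nlinarith

lemma le_tsum_sinc_sq (H : IsSamplingSequence a s lam A B) (ha : 0 ≤ a) (hs : 0 ≤ s)
    (hA : 0 ≤ A) (t : ℝ) :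
    A * (a / 2) ^ (2 * s + 1) ≤ ∑' n, 2 / π * (a * Real.sinc (a * (lam n - t))) ^ 2 := by
  have h := (H (modulatedIndicator a t) measurable_modulatedIndicator
    (fun ξ => modulatedIndicator_eq_zero le_rfl)
    (integrable_norm_modulatedIndicator_sq_mul (by positivity))).1
  simp only [norm_fourierSample_modulatedIndicator_sq ha le_rfl,
    weightedEnergy_modulatedIndicator] at h
  exact (mul_le_mul_of_nonneg_left (le_setIntegral_abs_rpow (by positivity) ha) hA).trans h

lemma sum_norm_fourierSample_modulatedIndicator_le (H : IsSamplingSequence a s lam A B)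
    (hs : 0 ≤ s) (hA : 0 < A) {r : ℝ} (hr : 0 < r) (hra : r ≤ a) (t : ℝ) (F : Finset ℤ) :
    ∑ n ∈ F, ‖fourierSample a (modulatedIndicator r t) (lam n)‖ ^ 2 ≤
      max B 0 * (2 * r ^ (2 * s + 1)) := by
  have hsupp : ∀ ξ : ℝ, ξ ∉ Set.Icc (-a) a → modulatedIndicator r t ξ = 0 :=
    fun ξ => modulatedIndicator_eq_zero hra
  have hint := integrable_norm_modulatedIndicator_sq_mul (r := r) (t := t)
    (by positivity : 0 ≤ 2 * s)
  have hE := weightedEnergy_modulatedIndicator (r := r) (t := t) s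
  have hsum := H.summable hA measurable_modulatedIndicator hsupp hint <| hE ▸
    (by positivity : (0 : ℝ) < (r / 2) ^ (2 * s + 1)).trans_le
      (le_setIntegral_abs_rpow (by positivity) hr.le)
  calc ∑ n ∈ F, ‖fourierSample a (modulatedIndicator r t) (lam n)‖ ^ 2
      ≤ ∑' n, ‖fourierSample a (modulatedIndicator r t) (lam n)‖ ^ 2 :=
        hsum.sum_le_tsum F fun n _ => by positivity
    _ ≤ B * weightedEnergy s (modulatedIndicator r t) :=
        (H _ measurable_modulatedIndicator hsupp hint).2
    _ ≤ max B 0 * weightedEnergy s (modulatedIndicator r t) := by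
        gcongr
        · exact hE ▸ setIntegral_nonneg measurableSet_Icc fun ξ _ => by positivity
        · exact le_max_left B 0
    _ ≤ max B 0 * (2 * r ^ (2 * s + 1)) := by
        gcongr
        exact hE ▸ setIntegral_abs_rpow_le (by positivity) hr.le

-- Test the upper inequality on `modulatedIndicator ρ⁻¹ t`.
lemma exists_card_le_rpow (H : IsSamplingSequence a s lam A B) (ha : 0 < a) (hs : 0 ≤ s)
    (hA : 0 < A) :
    ∃ C, 0 ≤ C ∧ ∀ ρ ≥ a⁻¹, ∀ (t : ℝ) (F : Finset ℤ), (∀ n ∈ F, |lam n - t| ≤ ρ) →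
      (#F : ℝ) ≤ C * ρ ^ (1 - 2 * s) := by
  refine ⟨π ^ 3 * max B 0 / 4, by positivity, fun ρ hρ t F hF => ?_⟩
  have hρ0 : 0 < ρ := (inv_pos.2 ha).trans_le hρ
  set r := ρ⁻¹ with hr_def
  have hr : 0 < r := inv_pos.2 hρ0
  have hra : r ≤ a := inv_le_of_inv_le₀ ha hρ
  have hterm : ∀ n ∈ F,
      8 * r ^ 2 / π ^ 3 ≤ ‖fourierSample a (modulatedIndicator r t) (lam n)‖ ^ 2 := by
    intro n hn
    have hsinc : 2 / π ≤ Real.sinc (r * (lam n - t)) := Real.two_div_pi_le_sinc <| by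
      rw [abs_mul, abs_of_pos hr]
      calc r * |lam n - t| ≤ r * ρ := by gcongr; exact hF n hn
        _ = 1 := inv_mul_cancel₀ hρ0.ne'
    rw [norm_fourierSample_modulatedIndicator_sq hr.le hra]
    calc 8 * r ^ 2 / π ^ 3 = 2 / π * (r * (2 / π)) ^ 2 := by ring
      _ ≤ _ := by gcongr
  have hcard : (#F : ℝ) * (8 * r ^ 2 / π ^ 3) ≤ max B 0 * (2 * r ^ (2 * s + 1)) :=
    le_trans (by simpa using card_nsmul_le_sum F _ _ hterm)
      (H.sum_norm_fourierSample_modulatedIndicator_le hs hA hr hra t F)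
  have hpow : ρ ^ (1 - 2 * s) = r ^ (2 * s + 1) / r ^ 2 := by
    rw [← Real.rpow_natCast, ← Real.rpow_sub hr, hr_def, Real.inv_rpow hρ0.le,
      ← Real.rpow_neg hρ0.le]
    push_cast
    ring_nf
  calc (#F : ℝ) = #F * (8 * r ^ 2 / π ^ 3) * (π ^ 3 / (8 * r ^ 2)) := by field_simp
    _ ≤ max B 0 * (2 * r ^ (2 * s + 1)) * (π ^ 3 / (8 * r ^ 2)) := by gcongr
    _ = π ^ 3 * max B 0 / 4 * ρ ^ (1 - 2 * s) := by rw [hpow]; field_simp; ring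

end IsSamplingSequence

section SublinearCounting

variable {ι : Type*} (x : ι → ℝ)

lemma exists_finset_card_eq_of_forall_exists_abs_sub_le {G : ℝ} (hG : 0 ≤ G)
    (hnear : ∀ γ, ∃ n, |x n - γ| ≤ G) (M : ℕ) :
    ∃ F : Finset ι, #F = M ∧ ∀ n ∈ F, |x n| ≤ (2 * G + 1) * M := by
  classical
  choose near hnear using hnear
  set d := 2 * G + 1
  have hd : 0 < d := by positivity
  -- points within `G` of centres `d` apart are distinct, since `2 G < d`
  have hinj : Set.InjOn (fun j : ℕ => near (d * j)) (range M) := by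
    intro j _ k _ (hjk : near (d * j) = near (d * k))
    by_contra hne
    have hjk' : (j : ℤ) ≠ k := by exact_mod_cast hne
    have h1 : (1 : ℝ) ≤ |(j : ℝ) - k| := by exact_mod_cast Int.one_le_abs (sub_ne_zero.2 hjk')
    have h2 : |d * (j : ℝ) - d * k| ≤ |x (near (d * j)) - d * j| + |x (near (d * k)) - d * k| := by
      rw [hjk, abs_sub_comm (x _) (d * j)]
      exact abs_sub_le _ _ _
    rw [← mul_sub, abs_mul, abs_of_pos hd] at h2
    nlinarith [hnear (d * j), hnear (d * k)]
  refine ⟨(range M).image fun j : ℕ => near (d * j), by simp [card_image_of_injOn hinj], ?_⟩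
  simp only [mem_image, mem_range, forall_exists_index, and_imp]
  rintro _ j hj rfl
  have hj' : (j : ℝ) + 1 ≤ M := by exact_mod_cast hj
  have hdj : 0 ≤ d * j := mul_nonneg hd.le j.cast_nonneg
  calc |x (near (d * j))| ≤ |x (near (d * j)) - d * j| + |d * j| := by
        linarith [abs_sub_abs_le_abs_sub (x (near (d * j))) (d * j)]
    _ ≤ G + d * j := by rw [abs_of_nonneg hdj]; linarith [hnear (d * j)]
    _ ≤ d * M := by nlinarith

theorem exists_forall_lt_abs_sub_of_card_le_rpow {β C ρ₀ : ℝ} (hβ : β < 1)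
    (hcount : ∀ ρ ≥ ρ₀, ∀ F : Finset ι, (∀ n ∈ F, |x n| ≤ ρ) → (#F : ℝ) ≤ C * ρ ^ β)
    {G : ℝ} (hG : 0 ≤ G) : ∃ γ, ∀ n, G < |x n - γ| := by
  by_contra! hnear
  set d := 2 * G + 1
  have hd : 0 < d := by positivity
  have hgrowth : Tendsto (fun M : ℕ => (M : ℝ) ^ (1 - β)) atTop atTop :=
    (tendsto_rpow_atTop (sub_pos.2 hβ)).comp tendsto_natCast_atTop_atTop
  obtain ⟨M, hMpos, hMρ, hMbig⟩ := ((eventually_gt_atTop 0).and <|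
    (tendsto_natCast_atTop_atTop.const_mul_atTop hd).eventually_ge_atTop ρ₀ |>.and <|
      hgrowth.eventually_gt_atTop (C * d ^ β)).exists
  have hM : (0 : ℝ) < M := by exact_mod_cast hMpos
  obtain ⟨F, hFcard, hF⟩ := exists_finset_card_eq_of_forall_exists_abs_sub_le x hG hnear M
  have hcard := hcount _ hMρ F hF
  rw [hFcard, Real.mul_rpow hd.le hM.le] at hcard
  have hsplit : (M : ℝ) = M ^ (1 - β) * M ^ β := by
    rw [← Real.rpow_add hM]; simp
  nlinarith [Real.rpow_pos_of_pos hM β]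

-- Dyadic decomposition of the points according to the size of `|x n| / G`.
theorem sum_inv_sq_le_of_card_le {C G : ℝ} (hG : 0 < G) (hx : ∀ n, G ≤ |x n|)
    (hcount : ∀ ρ ≥ G, ∀ F : Finset ι, (∀ n ∈ F, |x n| ≤ ρ) → (#F : ℝ) ≤ C * ρ)
    (F : Finset ι) : ∑ n ∈ F, ((x n) ^ 2)⁻¹ ≤ 4 * C / G := by
  classical
  have hC : 0 ≤ C := by
    have := hcount G le_rfl ∅ (by simp)
    simp only [card_empty, Nat.cast_zero] at this
    exact nonneg_of_mul_nonneg_left this hG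
  choose k hk using fun n => exists_nat_pow_near ((one_le_div hG).2 (hx n)) one_lt_two
  have hshell : ∀ j, ∑ n ∈ F with k n = j, ((x n) ^ 2)⁻¹ ≤ 2 * C / G * (1 / 2) ^ j := by
    intro j
    have hcard := hcount (2 ^ (j + 1) * G) (le_mul_of_one_le_left hG.le (one_le_pow₀ one_le_two))
      {n ∈ F | k n = j} fun n hn => by
        rw [(mem_filter.1 hn).2.symm]
        exact (div_le_iff₀ hG).1 (hk n).2.le
    have hterm : ∀ n ∈ {n ∈ F | k n = j}, ((x n) ^ 2)⁻¹ ≤ ((2 ^ j * G) ^ 2)⁻¹ := by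
      intro n hn
      rw [← (mem_filter.1 hn).2, ← sq_abs (x n)]
      have := (le_div_iff₀ hG).1 (hk n).1
      gcongr
    calc ∑ n ∈ F with k n = j, ((x n) ^ 2)⁻¹ ≤ #{n ∈ F | k n = j} * ((2 ^ j * G) ^ 2)⁻¹ := by
          simpa using sum_le_card_nsmul _ _ _ hterm
      _ ≤ C * (2 ^ (j + 1) * G) * ((2 ^ j * G) ^ 2)⁻¹ := by gcongr
      _ = 2 * C / G * (1 / 2) ^ j := by rw [one_div, inv_pow, pow_succ]; field_simp
  calc ∑ n ∈ F, ((x n) ^ 2)⁻¹ = ∑ j ∈ F.image k, ∑ n ∈ F with k n = j, ((x n) ^ 2)⁻¹ :=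
        (sum_fiberwise_of_maps_to (fun n hn => mem_image_of_mem k hn) _).symm
    _ ≤ ∑ j ∈ F.image k, 2 * C / G * (1 / 2) ^ j := sum_le_sum fun j _ => hshell j
    _ ≤ 2 * C / G * 2 := by
        rw [← mul_sum]
        gcongr
        calc ∑ j ∈ F.image k, (1 / 2 : ℝ) ^ j ≤ ∑' j, (1 / 2 : ℝ) ^ j :=
              summable_geometric_two.sum_le_tsum _ fun j _ => by positivity
          _ = 2 := tsum_geometric_two
    _ = 4 * C / G := by ring

theorem sum_mul_sinc_sq_le_of_card_le {a C G : ℝ} (ha : a ≠ 0) (hG : 0 < G)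
    (hx : ∀ n, G ≤ |x n|)
    (hcount : ∀ ρ ≥ G, ∀ F : Finset ι, (∀ n ∈ F, |x n| ≤ ρ) → (#F : ℝ) ≤ C * ρ)
    (F : Finset ι) : ∑ n ∈ F, (a * Real.sinc (a * x n)) ^ 2 ≤ 4 * C / G := by
  refine (sum_le_sum fun n _ => ?_).trans (sum_inv_sq_le_of_card_le x hG hx hcount F)
  have hne : x n ≠ 0 := abs_pos.1 (hG.trans_le (hx n))
  calc (a * Real.sinc (a * x n)) ^ 2 = a ^ 2 * Real.sinc (a * x n) ^ 2 := mul_pow _ _ _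
    _ ≤ a ^ 2 * ((a * x n) ^ 2)⁻¹ := by
        gcongr
        exact Real.sinc_sq_le_inv_sq (mul_ne_zero ha hne)
    _ = ((x n) ^ 2)⁻¹ := by field_simp

end SublinearCounting

theorem not_isSamplingSequence {a s A B : ℝ} {lam : ℤ → ℝ} (ha : 0 < a) (hs : 0 < s)
    (hA : 0 < A) : ¬ IsSamplingSequence a s lam A B := by
  intro H
  obtain ⟨C, hC0, hC⟩ := H.exists_card_le_rpow ha hs.le hA
  have hE : 0 < A * (a / 2) ^ (2 * s + 1) := by positivity
  obtain ⟨G, hG1, hGa, hGE⟩ :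
      ∃ G, 1 ≤ G ∧ a⁻¹ ≤ G ∧ 8 * C / π < A * (a / 2) ^ (2 * s + 1) * G :=
    ((eventually_ge_atTop 1).and <| (eventually_ge_atTop a⁻¹).and <|
      (tendsto_id.const_mul_atTop hE).eventually_gt_atTop _).exists
  have hG : 0 < G := by linarith
  obtain ⟨γ, hγ⟩ := exists_forall_lt_abs_sub_of_card_le_rpow lam (by linarith : 1 - 2 * s < 1)
    (fun ρ hρ F hF => hC ρ hρ 0 F (by simpa using hF)) hG.le
  have hlinear : ∀ ρ ≥ G, ∀ F : Finset ℤ, (∀ n ∈ F, |lam n - γ| ≤ ρ) → (#F : ℝ) ≤ C * ρ :=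
    fun ρ hρ F hF => (hC ρ (hGa.trans hρ) γ F hF).trans <|
      mul_le_mul_of_nonneg_left (Real.rpow_le_self_of_one_le (hG1.trans hρ) (by linarith)) hC0
  have hsum : ∀ F : Finset ℤ,
      ∑ n ∈ F, 2 / π * (a * Real.sinc (a * (lam n - γ))) ^ 2 ≤ 8 * C / π / G := fun F =>
    calc ∑ n ∈ F, 2 / π * (a * Real.sinc (a * (lam n - γ))) ^ 2 ≤ 2 / π * (4 * C / G) := by
          rw [← mul_sum]
          gcongr
          exact sum_mul_sinc_sq_le_of_card_le (fun n => lam n - γ) ha.ne' hG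
            (fun n => (hγ n).le) hlinear F
      _ = 8 * C / π / G := by ring
  have hlow := H.le_tsum_sinc_sq ha.le hs.le hA.le γ
  have hup := Real.tsum_le_of_sum_le (fun n => by positivity) hsum
  rw [← div_lt_iff₀ hG] at hGE
  linarith

theorem stmt15_general (a s : ℝ) (ha : 0 < a) (hs0 : 0 < s) :
    ¬ ∃ (lam : ℤ → ℝ) (A B : ℝ), 0 < A ∧ 0 < B ∧
      ∀ g : ℝ → ℂ, Measurable g → (∀ ξ : ℝ, ξ ∉ Set.Icc (-a) a → g ξ = 0) →
        Integrable (fun ξ : ℝ => ‖g ξ‖ ^ 2 * |ξ| ^ (2 * s)) →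
        A * (∫ ξ : ℝ, ‖g ξ‖ ^ 2 * |ξ| ^ (2 * s)) ≤
          (∑' n : ℤ, ‖(((2 * Real.pi) ^ (-(1 / 2) : ℝ) : ℝ) : ℂ) *
            ∫ ξ in Set.Icc (-a) a, g ξ * Complex.exp (Complex.I * lam n * ξ)‖ ^ 2) ∧
        (∑' n : ℤ, ‖(((2 * Real.pi) ^ (-(1 / 2) : ℝ) : ℝ) : ℂ) *
            ∫ ξ in Set.Icc (-a) a, g ξ * Complex.exp (Complex.I * lam n * ξ)‖ ^ 2) ≤
          B * ∫ ξ : ℝ, ‖g ξ‖ ^ 2 * |ξ| ^ (2 * s) := by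
  rintro ⟨lam, A, B, hA, -, H⟩
  exact not_isSamplingSequence ha hs0 hA H

theorem stmt15 (a s : ℝ) (ha : 0 < a) (hs0 : 0 < s) (hs : s < 1 / 2) :
    ¬ ∃ (lam : ℤ → ℝ) (A B : ℝ), 0 < A ∧ 0 < B ∧
      ∀ g : ℝ → ℂ, Measurable g → (∀ ξ : ℝ, ξ ∉ Set.Icc (-a) a → g ξ = 0) →
        Integrable (fun ξ : ℝ => ‖g ξ‖ ^ 2 * |ξ| ^ (2 * s)) →
        A * (∫ ξ : ℝ, ‖g ξ‖ ^ 2 * |ξ| ^ (2 * s)) ≤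
          (∑' n : ℤ, ‖(((2 * Real.pi) ^ (-(1 / 2) : ℝ) : ℝ) : ℂ) *
            ∫ ξ in Set.Icc (-a) a, g ξ * Complex.exp (Complex.I * lam n * ξ)‖ ^ 2) ∧
        (∑' n : ℤ, ‖(((2 * Real.pi) ^ (-(1 / 2) : ℝ) : ℝ) : ℂ) *
            ∫ ξ in Set.Icc (-a) a, g ξ * Complex.exp (Complex.I * lam n * ξ)‖ ^ 2) ≤
          B * ∫ ξ : ℝ, ‖g ξ‖ ^ 2 * |ξ| ^ (2 * s) :=
  stmt15_general a s ha hs0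
end
end
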